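/- arXiv:math/0606431 — 3 statements merged into one kernel-verified Lean document; each statement's English description precedes it below -/
import Mathlib

section
/- Let 𝒱₂ ≤ 𝒱₁ and 𝒲₂ ≤ 𝒲₁ be partitions of {1,…,n} (≤ meaning refinement). Then |𝒲₁| + |𝒱₁| + |𝒱₂ ∨ 𝒲₂| ≥ |𝒱₁ ∨ 𝒲₁| + |𝒲₂| + |𝒱₂|, where |𝒰| := n − #𝒰. -/
open Submodule Module

noncomputable section AuxDSub
variable {n : ℕ}

/-- The difference subspace associated to a setoid. -/
private def dSub (V : Setoid (Fin n)) : Submodule ℚ (Fin n → ℚ) :=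
  Submodule.span ℚ {x | ∃ i j, V i j ∧ x = Pi.single i 1 - Pi.single j 1}

private lemma single_sub_mem {V : Setoid (Fin n)} {i j : Fin n} (h : V i j) :
    Pi.single i (1:ℚ) - Pi.single j 1 ∈ dSub V :=
  Submodule.subset_span ⟨i, j, h, rfl⟩

private lemma dSub_mono {V W : Setoid (Fin n)} (h : V ≤ W) : dSub V ≤ dSub W := by
  apply Submodule.span_le.2
  rintro x ⟨i, j, hij, rfl⟩
  exact single_sub_mem (h hij)

private lemma dSub_sup (V W : Setoid (Fin n)) : dSub (V ⊔ W) = dSub V ⊔ dSub W := by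
  apply le_antisymm
  · apply Submodule.span_le.2
    rintro x ⟨i, j, hij, rfl⟩
    rw [Setoid.sup_eq_eqvGen] at hij
    induction hij with
    | rel a b h =>
      rcases h with h | h
      · exact Submodule.mem_sup_left (single_sub_mem h)
      · exact Submodule.mem_sup_right (single_sub_mem h)
    | refl a => simp
    | symm a b _ ih => simpa using neg_mem ih
    | trans a b c _ _ ih1 ih2 => simpa using add_mem ih1 ih2
  · exact sup_le (dSub_mono le_sup_left) (dSub_mono le_sup_right)

private lemma finrank_dSub (V : Setoid (Fin n)) :
    (Module.finrank ℚ (dSub V) : ℤ) = (n : ℤ) - Nat.card (Quotient V) := by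
  classical
  have hQ : Nat.card (Quotient V) = Fintype.card (Quotient V) := Nat.card_eq_fintype_card
  -- the "sum over blocks" linear map
  set ψ : (Fin n → ℚ) →ₗ[ℚ] (Quotient V → ℚ) :=
    LinearMap.pi fun q => ∑ i ∈ Finset.univ.filter (fun i => Quotient.mk V i = q),
      LinearMap.proj i with hψdef
  have hψ : ∀ i : Fin n, ψ (Pi.single i 1) = Pi.single (Quotient.mk V i) 1 := by
    intro i
    funext q
    simp only [hψdef, LinearMap.pi_apply, LinearMap.coe_sum, Finset.sum_apply,
      LinearMap.proj_apply]
    simp only [Pi.single_apply]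
    rw [Finset.sum_ite_eq' (Finset.univ.filter (fun i => Quotient.mk V i = q)) i
      (fun _ => (1:ℚ))]
    by_cases h : Quotient.mk V i = q <;> simp [h, eq_comm]
  have hsurj : LinearMap.range ψ = ⊤ := by
    rw [← top_le_iff, ← (Pi.basisFun ℚ (Quotient V)).span_eq, Submodule.span_le]
    rintro x ⟨q, rfl⟩
    obtain ⟨i, rfl⟩ := Quotient.exists_rep q
    refine ⟨Pi.single i 1, ?_⟩
    rw [hψ i]
    simp [Pi.basisFun_apply]
  have hker : dSub V ≤ LinearMap.ker ψ := by
    apply Submodule.span_le.2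
    rintro x ⟨i, j, hij, rfl⟩
    have hq : Quotient.mk V i = Quotient.mk V j := Quotient.sound hij
    simp [LinearMap.mem_ker, map_sub, hψ, hq]
  have hrn := LinearMap.finrank_range_add_finrank_ker ψ
  rw [hsurj] at hrn
  simp only [finrank_top, Module.finrank_pi, Fintype.card_fin] at hrn
  -- upper bound
  have hub : Module.finrank ℚ (dSub V) ≤ n - Fintype.card (Quotient V) := by
    have := Submodule.finrank_mono hker
    omega
  -- lower bound: together with single representatives the dSub spans everything
  set T : Submodule ℚ (Fin n → ℚ) :=
    Submodule.span ℚ (Set.range fun q : Quotient V => Pi.single q.out (1:ℚ)) with hTdef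
  have htop : dSub V ⊔ T = ⊤ := by
    rw [← top_le_iff, ← (Pi.basisFun ℚ (Fin n)).span_eq, Submodule.span_le]
    rintro x ⟨i, rfl⟩
    have hrel : V i ((Quotient.mk V i).out) :=
      Quotient.exact (Quotient.out_eq (Quotient.mk V i)).symm
    have h1 : Pi.single i (1:ℚ) - Pi.single ((Quotient.mk V i).out) 1 ∈ dSub V :=
      single_sub_mem hrel
    have h2 : Pi.single ((Quotient.mk V i).out) (1:ℚ) ∈ T :=
      Submodule.subset_span ⟨Quotient.mk V i, rfl⟩
    have : Pi.basisFun ℚ (Fin n) i = Pi.single i (1:ℚ) := by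
      simp [Pi.basisFun_apply]
    rw [this]
    have hmem := Submodule.add_mem (dSub V ⊔ T) (Submodule.mem_sup_left h1)
      (Submodule.mem_sup_right h2)
    simpa using hmem
  have hT : Module.finrank ℚ T ≤ Fintype.card (Quotient V) := by
    refine (finrank_span_le_card _).trans ?_
    rw [Set.toFinset_range]
    exact (Finset.card_image_le).trans (by simp)
  have hlb : n ≤ Module.finrank ℚ (dSub V) + Fintype.card (Quotient V) := by
    have h1 : Module.finrank ℚ ((dSub V) ⊔ T : Submodule ℚ (Fin n → ℚ)) ≤
        Module.finrank ℚ (dSub V) + Module.finrank ℚ T :=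
      Submodule.finrank_add_le_finrank_add_finrank _ _
    rw [htop] at h1
    simp only [finrank_top, Module.finrank_pi, Fintype.card_fin] at h1
    omega
  have hcard : Fintype.card (Quotient V) ≤ n := by
    simpa using Fintype.card_le_of_surjective (Quotient.mk V) Quotient.exists_rep
  omega

private lemma finrank_key {A₁ A₂ B : Submodule ℚ (Fin n → ℚ)} (h : A₂ ≤ A₁) :
    Module.finrank ℚ (A₁ ⊔ B : Submodule ℚ (Fin n → ℚ)) + Module.finrank ℚ A₂ ≤
    Module.finrank ℚ A₁ + Module.finrank ℚ (A₂ ⊔ B : Submodule ℚ (Fin n → ℚ)) := by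
  have heq := Submodule.finrank_sup_add_finrank_inf_eq A₁ (A₂ ⊔ B)
  have h1 : A₁ ⊔ (A₂ ⊔ B) = A₁ ⊔ B := by
    rw [← sup_assoc, sup_eq_left.2 h]
  have h2 : A₂ ≤ A₁ ⊓ (A₂ ⊔ B) := le_inf h le_sup_left
  have h3 := Submodule.finrank_mono h2
  rw [h1] at heq
  omega

end AuxDSub

/-- The length `|𝒰| := n − #𝒰` of a partition `𝒰` of `{1,…,n}` (encoded as a setoid on
`Fin n`), where `#𝒰` is the number of blocks. -/
noncomputable def pLen {n : ℕ} (V : Setoid (Fin n)) : ℤ :=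
  (n : ℤ) - Nat.card (Quotient V)

private lemma pLen_eq {n : ℕ} (V : Setoid (Fin n)) :
    pLen V = (Module.finrank ℚ (dSub V) : ℤ) := (finrank_dSub V).symm

/-- For partitions `𝒱₂ ≤ 𝒱₁` and `𝒲₂ ≤ 𝒲₁` of `{1,…,n}` (`≤` meaning refinement):
`|𝒲₁| + |𝒱₁| + |𝒱₂ ∨ 𝒲₂| ≥ |𝒱₁ ∨ 𝒲₁| + |𝒲₂| + |𝒱₂|`. -/
theorem pLen_ineq_refinement {n : ℕ} (V₁ V₂ W₁ W₂ : Setoid (Fin n))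
    (hV : V₂ ≤ V₁) (hW : W₂ ≤ W₁) :
    pLen W₁ + pLen V₁ + pLen (V₂ ⊔ W₂) ≥ pLen (V₁ ⊔ W₁) + pLen W₂ + pLen V₂ := by
  rw [pLen_eq, pLen_eq, pLen_eq, pLen_eq, pLen_eq, pLen_eq, dSub_sup, dSub_sup]
  have h1 := finrank_key (B := dSub W₂) (dSub_mono hV)
  have h2 := finrank_key (B := dSub V₁) (dSub_mono hW)
  rw [sup_comm (dSub W₂) (dSub V₁), sup_comm (dSub W₁) (dSub V₁)] at h2
  omega
end

section
/- Let 𝒱₂ ≤ 𝒱₁ and 𝒲₂ ≤ 𝒲₁ be partitions of {1,…,n}. Then |𝒱₁ ∨ 𝒲₂| + |𝒱₂ ∨ 𝒲₁| ≥ |𝒱₁ ∨ 𝒲₁| + |𝒱₂ ∨ 𝒲₂|, where |𝒰| := n − #𝒰 and ∨ is the join in the partition lattice. -/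
/-- Merge the classes of `i` and `j` in the setoid `c`. -/
def mergeS {α : Type*} (c : Setoid α) (i j : α) : Setoid α where
  r x y := c x y ∨ (c x i ∧ c j y) ∨ (c x j ∧ c i y)
  iseqv := by
    refine ⟨fun x => Or.inl (c.refl x), ?_, ?_⟩
    · rintro x y (h | ⟨h1, h2⟩ | ⟨h1, h2⟩)
      · exact Or.inl (c.symm h)
      · exact Or.inr (Or.inr ⟨c.symm h2, c.symm h1⟩)
      · exact Or.inr (Or.inl ⟨c.symm h2, c.symm h1⟩)
    · rintro x y z (h | ⟨h1, h2⟩ | ⟨h1, h2⟩) (h' | ⟨h1', h2'⟩ | ⟨h1', h2'⟩)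
      · exact Or.inl (c.trans h h')
      · exact Or.inr (Or.inl ⟨c.trans h h1', h2'⟩)
      · exact Or.inr (Or.inr ⟨c.trans h h1', h2'⟩)
      · exact Or.inr (Or.inl ⟨h1, c.trans h2 h'⟩)
      · exact Or.inl (c.trans h1 (c.trans (c.symm (c.trans h2 h1')) h2'))
      · exact Or.inl (c.trans h1 h2')
      · exact Or.inr (Or.inr ⟨h1, c.trans h2 h'⟩)
      · exact Or.inl (c.trans h1 h2')
      · exact Or.inl (c.trans h1 (c.trans (c.symm (c.trans h2 h1')) h2'))

lemma mergeS_rel {α : Type*} (c : Setoid α) (i j : α) :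
    mergeS c i j i j := Or.inr (Or.inl ⟨c.refl i, c.refl j⟩)

lemma le_mergeS {α : Type*} (c : Setoid α) (i j : α) : c ≤ mergeS c i j :=
  Setoid.le_def.mpr fun h => Or.inl h

lemma mergeS_le {α : Type*} {c t : Setoid α} {i j : α} (h : c ≤ t) (hij : t i j) :
    mergeS c i j ≤ t := by
  rw [Setoid.le_def]
  rintro x y (hxy | ⟨h1, h2⟩ | ⟨h1, h2⟩)
  · exact h hxy
  · exact t.trans (h h1) (t.trans hij (h h2))
  · exact t.trans (h h1) (t.trans (t.symm hij) (h h2))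

lemma card_quot_le_of_le {n : ℕ} {x y : Setoid (Fin n)} (h : x ≤ y) :
    Nat.card (Quotient y) ≤ Nat.card (Quotient x) := by
  apply Nat.card_le_card_of_surjective (Quotient.map' id fun a b hab => h hab)
  intro q
  exact Quotient.inductionOn' q fun a => ⟨Quotient.mk'' a, rfl⟩

lemma card_quot_le_mergeS_add_one {n : ℕ} (c : Setoid (Fin n)) (i j : Fin n) :
    Nat.card (Quotient c) ≤ Nat.card (Quotient (mergeS c i j)) + 1 := by
  classical
  have hwd : ∀ a b : Fin n, c a b →
      (if c a j then (none : Option (Quotient (mergeS c i j)))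
        else some (Quotient.mk (mergeS c i j) a)) =
      (if c b j then none else some (Quotient.mk (mergeS c i j) b)) := by
    intro a b hab
    have hj : c a j ↔ c b j := ⟨fun h => c.trans (c.symm hab) h, fun h => c.trans hab h⟩
    by_cases ha : c a j
    · rw [if_pos ha, if_pos (hj.mp ha)]
    · rw [if_neg ha, if_neg (hj.not.mp ha)]
      exact congrArg some (Quotient.sound (show (mergeS c i j) a b from Or.inl hab))
  rw [← Finite.card_option]
  apply Nat.card_le_card_of_injective (Quotient.lift _ hwd)
  rintro ⟨x⟩ ⟨y⟩ hxy
  have hxy' : (if c x j then (none : Option (Quotient (mergeS c i j)))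
        else some (Quotient.mk (mergeS c i j) x)) =
      (if c y j then none else some (Quotient.mk (mergeS c i j) y)) := hxy
  by_cases hx : c x j <;> by_cases hy : c y j
  · exact Quotient.sound (c.trans hx (c.symm hy))
  · rw [if_pos hx, if_neg hy] at hxy'; exact absurd hxy' (by simp)
  · rw [if_neg hx, if_pos hy] at hxy'; exact absurd hxy' (by simp)
  · rw [if_neg hx, if_neg hy] at hxy'
    rcases Quotient.exact (Option.some_injective _ hxy') with h | ⟨h1, h2⟩ | ⟨h1, h2⟩
    · exact Quotient.sound h
    · exact absurd (c.symm h2) hy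
    · exact absurd h1 hx

lemma card_quot_mergeS_lt {n : ℕ} {c : Setoid (Fin n)} {i j : Fin n} (hij : ¬ c i j) :
    Nat.card (Quotient (mergeS c i j)) < Nat.card (Quotient c) := by
  refine lt_of_le_of_ne (card_quot_le_of_le (le_mergeS c i j)) fun heq => ?_
  set f : Quotient c → Quotient (mergeS c i j) :=
    Quotient.map' id fun a b hab => le_mergeS c i j hab with hf
  have hsurj : Function.Surjective f := fun q =>
    Quotient.inductionOn' q fun a => ⟨Quotient.mk'' a, rfl⟩
  have hbij : Function.Bijective f :=
    (Nat.bijective_iff_surjective_and_card f).mpr ⟨hsurj, heq.symm⟩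
  have : f (Quotient.mk c i) = f (Quotient.mk c j) :=
    Quotient.sound (mergeS_rel c i j)
  exact hij (Quotient.exact (hbij.injective this))

lemma main_ineq {n : ℕ} : ∀ (k : ℕ) (a b c : Setoid (Fin n)), c ≤ b →
    Nat.card (Quotient c) ≤ k →
    Nat.card (Quotient (a ⊔ c)) + Nat.card (Quotient b) ≤
      Nat.card (Quotient c) + Nat.card (Quotient (a ⊔ b)) := by
  intro k
  induction k with
  | zero =>
    intro a b c hcb hk
    have hc : IsEmpty (Quotient c) := by
      rcases Nat.card_eq_zero.mp (Nat.le_zero.mp hk) with h | h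
      · exact h
      · exact absurd h (not_infinite_iff_finite.mpr inferInstance)
    have hn : IsEmpty (Fin n) := ⟨fun x => hc.elim (Quotient.mk c x)⟩
    haveI := hn
    simp [Nat.card_of_isEmpty]
  | succ k ih =>
    intro a b c hcb hk
    by_cases hbc : b ≤ c
    · rw [le_antisymm hcb hbc]; omega
    · rw [Setoid.le_def] at hbc
      push_neg at hbc
      obtain ⟨i, j, hbij, hcij⟩ := hbc
      set c' := mergeS c i j with hc'
      have h1 : c ≤ c' := le_mergeS c i j
      have h2 : c' ≤ b := mergeS_le hcb hbij
      have h3 : Nat.card (Quotient c') < Nat.card (Quotient c) := card_quot_mergeS_lt hcij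
      have h5 : a ⊔ c' = mergeS (a ⊔ c) i j := by
        apply le_antisymm
        · refine sup_le (le_sup_left.trans (le_mergeS (a ⊔ c) i j)) ?_
          exact mergeS_le (le_sup_right.trans (le_mergeS (a ⊔ c) i j))
            (mergeS_rel (a ⊔ c) i j)
        · refine mergeS_le (sup_le_sup_left h1 a) ?_
          exact le_sup_right (a := a) (mergeS_rel c i j)
      have h6 : Nat.card (Quotient (a ⊔ c)) ≤ Nat.card (Quotient (a ⊔ c')) + 1 := by
        rw [h5]; exact card_quot_le_mergeS_add_one (a ⊔ c) i j
      have hih := ih a b c' h2 (by omega)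
      omega

theorem card_ineq {n : ℕ} (a b c : Setoid (Fin n)) (hcb : c ≤ b) :
    Nat.card (Quotient (a ⊔ c)) + Nat.card (Quotient b) ≤
      Nat.card (Quotient c) + Nat.card (Quotient (a ⊔ b)) :=
  main_ineq (Nat.card (Quotient c)) a b c hcb le_rfl

/-- For partitions `𝒱₂ ≤ 𝒱₁` and `𝒲₂ ≤ 𝒲₁` of `{1,…,n}`:
`|𝒱₁ ∨ 𝒲₂| + |𝒱₂ ∨ 𝒲₁| ≥ |𝒱₁ ∨ 𝒲₁| + |𝒱₂ ∨ 𝒲₂|`. -/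
theorem pLen_sup_ineq_refinement {n : ℕ} (V₁ V₂ W₁ W₂ : Setoid (Fin n))
    (hV : V₂ ≤ V₁) (hW : W₂ ≤ W₁) :
    pLen (V₁ ⊔ W₂) + pLen (V₂ ⊔ W₁) ≥ pLen (V₁ ⊔ W₁) + pLen (V₂ ⊔ W₂) := by
  have key := card_ineq (V₁ ⊔ W₂) (V₂ ⊔ W₁) (V₂ ⊔ W₂) (sup_le_sup_left hW V₂)
  have e1 : (V₁ ⊔ W₂) ⊔ (V₂ ⊔ W₂) = V₁ ⊔ W₂ :=
    sup_eq_left.mpr (sup_le_sup_right hV W₂)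
  have e2 : (V₁ ⊔ W₂) ⊔ (V₂ ⊔ W₁) = V₁ ⊔ W₁ := by
    apply le_antisymm
    · exact sup_le (sup_le le_sup_left (hW.trans le_sup_right))
        (sup_le (hV.trans le_sup_left) le_sup_right)
    · exact sup_le (le_sup_left.trans le_sup_left) (le_sup_right.trans le_sup_right)
  rw [e1, e2] at key
  unfold pLen
  have := Int.ofNat_le.mpr key
  push_cast at this ⊢
  linarith
end

section
/- For all permutations π, σ ∈ S_n, |π| + |σ| + |πσ| ≥ 2|π ∨ σ|, where π ∨ σ denotes the join of the partitions of {1,…,n} into orbits of π and of σ, |π| := n − #π for a permutation, and |𝒰| := n − #𝒰 for a partition. -/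
/-- The partition of `{1,…,n}` into orbits (cycles) of a permutation, as a setoid. -/
def orbitSetoid {α : Type*} (π : Equiv.Perm α) : Setoid α where
  r := π.SameCycle
  iseqv := ⟨fun x => Equiv.Perm.SameCycle.refl π x, fun h => h.symm, fun h h' => h.trans h'⟩

/-- The length `|π| := n − #π` of a permutation, where `#π` is the number of cycles
(orbits) of `π`. -/
noncomputable def permLen {n : ℕ} (π : Equiv.Perm (Fin n)) : ℤ :=
  (n : ℤ) - Nat.card (Quotient (orbitSetoid π))

/-!
In terms of cycle counts the claim reads `#π + #σ + #(πσ) ≤ n + 2 #(π ∨ σ)`, with equality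
for `σ = 1`. Build `σ` from `1` by right multiplications `σ ↦ σ (a b)` with `a`, `b` in
different cycles of `σ`; each such step merges two cycles, so `#σ` drops by one, and
`π ∨ σ (a b) = (π ∨ σ) ∨ (a b)`. If `a` and `b` already share a block of `π ∨ σ`, the join is
unchanged while `#(πσ)` drops by at most one. Otherwise the join loses a block, and since
`a`, `b` then lie in different cycles of `πσ`, `#(πσ)` drops by one as well.
-/

open Equiv Equiv.Perm

section OrbitSetoid

variable {α : Type*}

theorem orbitSetoid_le_iff {f : Perm α} {K : Setoid α} :
    orbitSetoid f ≤ K ↔ ∀ x, K x (f x) := by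
  refine ⟨fun h x => h (sameCycle_apply_right.2 (SameCycle.refl f x)), fun h => ?_⟩
  rintro x _ ⟨i, rfl⟩
  induction i using Int.induction_on with
  | zero => exact K.refl x
  | succ i ih =>
    have hstep : (f ^ ((i : ℤ) + 1)) x = f ((f ^ (i : ℤ)) x) := by
      rw [add_comm, zpow_add, zpow_one, mul_apply]
    exact K.trans ih (hstep ▸ h _)
  | pred i ih =>
    have hstep : f ((f ^ (-(i : ℤ) - 1)) x) = (f ^ (-(i : ℤ))) x := by
      rw [← mul_apply, ← zpow_one_add, add_sub_cancel]
    exact K.trans ih (K.symm (hstep ▸ h _))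

theorem orbitSetoid_mul_le (f g : Perm α) :
    orbitSetoid (f * g) ≤ orbitSetoid f ⊔ orbitSetoid g :=
  orbitSetoid_le_iff.2 fun x =>
    (orbitSetoid f ⊔ orbitSetoid g).trans
      (le_sup_right (a := orbitSetoid f) (orbitSetoid_le_iff.1 le_rfl x))
      (le_sup_left (b := orbitSetoid g) (orbitSetoid_le_iff.1 le_rfl (g x)))

variable [DecidableEq α]

theorem orbitSetoid_swap_le_iff {a b : α} {K : Setoid α} :
    orbitSetoid (swap a b) ≤ K ↔ K a b := by
  refine orbitSetoid_le_iff.trans ⟨fun h => by simpa using h a, fun h x => ?_⟩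
  rcases eq_or_ne x a with rfl | hxa
  · simpa using h
  rcases eq_or_ne x b with rfl | hxb
  · simpa using K.symm h
  · simp [swap_apply_of_ne_of_ne hxa hxb]

end OrbitSetoid

section Setoid

variable {α : Type*}

theorem card_quotient_le_of_le [Finite α] {J K : Setoid α} (h : J ≤ K) :
    Nat.card (Quotient K) ≤ Nat.card (Quotient J) :=
  Nat.card_le_card_of_surjective (Setoid.map_of_le h) (Quotient.ind fun x => ⟨⟦x⟧, rfl⟩)

variable [DecidableEq α]

theorem sup_orbitSetoid_swap_of_rel {J : Setoid α} {a b : α} (h : J a b) :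
    J ⊔ orbitSetoid (swap a b) = J :=
  sup_eq_left.2 (orbitSetoid_swap_le_iff.2 h)

/-- The quotient is the image of the self-map of `α ⧸ J` sending the class of `b` to that
of `a`. -/
theorem card_quotient_sup_orbitSetoid_swap [Finite α] {J : Setoid α} {a b : α} (h : ¬J a b) :
    Nat.card (Quotient (J ⊔ orbitSetoid (swap a b))) + 1 = Nat.card (Quotient J) := by
  classical
  set K := J ⊔ orbitSetoid (swap a b)
  set g : Quotient J → Quotient J := Function.update (id : Quotient J → Quotient J) ⟦b⟧ ⟦a⟧
  have hab : (⟦a⟧ : Quotient J) ≠ ⟦b⟧ := fun e => h (Quotient.exact e)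
  have hg : g ⟦a⟧ = g ⟦b⟧ := by simp [g, hab]
  have hproj : Setoid.map_of_le (le_sup_left : J ≤ K) ∘ g = Setoid.map_of_le le_sup_left := by
    funext q
    by_cases hq : q = ⟦b⟧
    · subst hq
      simp only [Function.comp_apply, g, Function.update_self]
      exact Quotient.sound ((orbitSetoid_swap_le_iff (a := a) (b := b)).1 le_sup_right)
    · simp [g, hq]
  have hker : K = Setoid.ker (g ∘ Quotient.mk J) := by
    refine le_antisymm (sup_le (fun x y hxy => congrArg g (Quotient.sound hxy))
      ((orbitSetoid_swap_le_iff (a := a) (b := b)).2 hg)) fun x y hxy => Quotient.exact ?_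
    have hproj' := congrFun hproj
    exact (hproj' ⟦x⟧).symm.trans ((congrArg _ hxy).trans (hproj' ⟦y⟧))
  have hrange : Set.range (g ∘ Quotient.mk J) = Set.univ \ {⟦b⟧} := by
    rw [Quotient.mk_surjective.range_comp]
    ext q
    simp only [Set.mem_range, Set.mem_sdiff, Set.mem_univ, Set.mem_singleton_iff, true_and]
    constructor
    · rintro ⟨p, rfl⟩
      by_cases hp : p = ⟦b⟧ <;> simp [g, hp, hab]
    · exact fun hq => ⟨q, by simp [g, hq]⟩
  rw [hker, Nat.card_congr (Setoid.quotientKerEquivRange _), hrange, Nat.card_coe_set_eq,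
    Set.ncard_sdiff_singleton_add_one (Set.mem_univ _), Set.ncard_univ]

end Setoid

namespace Equiv.Perm

variable {α : Type*}

noncomputable def numCycles (σ : Perm α) : ℕ :=
  Nat.card (Quotient (orbitSetoid σ))

theorem orbitSetoid_one : orbitSetoid (1 : Perm α) = ⊥ :=
  Setoid.ext fun _ _ => sameCycle_one

theorem numCycles_one : numCycles (1 : Perm α) = Nat.card α := by
  rw [numCycles, orbitSetoid_one, Nat.card_congr Setoid.quotientBotEquiv]

variable [Finite α]

theorem numCycles_le_card (σ : Perm α) : numCycles σ ≤ Nat.card α :=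
  Nat.card_le_card_of_surjective _ Quotient.mk_surjective

section

variable [DecidableEq α]

/-- Along the `ρ`-cycle of `a`, the product `ρ * swap a b` runs from `b` through `ρ a, ρ² a, …`
until it comes back to `a`. -/
theorem sameCycle_mul_swap {ρ : Perm α} {a b : α} (h : ¬ρ.SameCycle a b) :
    (ρ * swap a b).SameCycle b a := by
  have hb (k : ℕ) : (ρ ^ k) a ≠ b := fun e => h ⟨k, by rw [zpow_natCast, e]⟩
  have key (k : ℕ) :
      (ρ * swap a b).SameCycle b a ∨ (ρ * swap a b).SameCycle b ((ρ ^ (k + 1)) a) := by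
    induction k with
    | zero => exact Or.inr ⟨1, by simp⟩
    | succ k ih =>
      rcases ih with hba | hk
      · exact Or.inl hba
      by_cases ha : (ρ ^ (k + 1)) a = a
      · rw [ha] at hk
        exact Or.inl hk
      · refine Or.inr (hk.trans ⟨1, ?_⟩)
        simp [pow_succ' ρ (k + 1), swap_apply_of_ne_of_ne ha (hb _)]
  have hper : (ρ ^ (orderOf ρ - 1 + 1)) a = a := by
    rw [Nat.sub_add_cancel (orderOf_pos ρ), pow_orderOf_eq_one, one_apply]
  exact (key (orderOf ρ - 1)).elim id fun hk => by rwa [hper] at hk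

theorem orbitSetoid_mul_swap {ρ : Perm α} {a b : α} (h : ¬ρ.SameCycle a b) :
    orbitSetoid (ρ * swap a b) = orbitSetoid ρ ⊔ orbitSetoid (swap a b) := by
  have hswap : orbitSetoid (swap a b) ≤ orbitSetoid (ρ * swap a b) :=
    orbitSetoid_swap_le_iff.2 (sameCycle_mul_swap h).symm
  refine le_antisymm (orbitSetoid_mul_le _ _) (sup_le (orbitSetoid_le_iff.2 fun x => ?_) hswap)
  have hx : (ρ * swap a b).SameCycle x (swap a b x) := hswap (orbitSetoid_le_iff.1 le_rfl x)
  show (ρ * swap a b).SameCycle x (ρ x)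
  simpa using hx.trans (sameCycle_apply_right.2 (SameCycle.refl _ (swap a b x)))

theorem numCycles_mul_swap {ρ : Perm α} {a b : α} (h : ¬ρ.SameCycle a b) :
    numCycles (ρ * swap a b) + 1 = numCycles ρ := by
  rw [numCycles, orbitSetoid_mul_swap h]
  exact card_quotient_sup_orbitSetoid_swap h

theorem numCycles_mul_swap_le (ρ : Perm α) (a b : α) :
    numCycles (ρ * swap a b) ≤ numCycles ρ + 1 := by
  by_cases h : (ρ * swap a b).SameCycle a b
  · have hle := orbitSetoid_mul_le (ρ * swap a b) (swap a b)
    rw [mul_swap_mul_self, sup_orbitSetoid_swap_of_rel h] at hle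
    exact (card_quotient_le_of_le hle).trans (Nat.le_succ _)
  · have := numCycles_mul_swap h
    rw [mul_swap_mul_self] at this
    omega

/-- If `σ a ≠ a`, then `σ = σ' * swap a (σ a)` where `σ' = σ * swap a (σ a)` fixes `σ a` and so
has one more cycle than `σ`. -/
@[elab_as_elim]
theorem induction_on_mul_swap_of_not_sameCycle {P : Perm α → Prop} (σ : Perm α) (one : P 1)
    (mul_swap : ∀ σ a b, ¬σ.SameCycle a b → P σ → P (σ * swap a b)) : P σ := by
  by_cases hσ : σ = 1
  · exact hσ ▸ one
  obtain ⟨a, ha⟩ : ∃ a, σ a ≠ a := not_forall.1 fun h => hσ (Equiv.ext h)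
  have hsplit : ¬(σ * swap a (σ a)).SameCycle a (σ a) := fun hc =>
    ha (hc.symm.eq_of_left (by simp [Function.IsFixedPt]))
  have hcount : numCycles σ + 1 = numCycles (σ * swap a (σ a)) := by
    simpa only [mul_swap_mul_self] using numCycles_mul_swap hsplit
  have hbound := numCycles_le_card (σ * swap a (σ a))
  simpa using mul_swap _ a (σ a) hsplit
    (induction_on_mul_swap_of_not_sameCycle (σ * swap a (σ a)) one mul_swap)
termination_by Nat.card α - numCycles σ

theorem numCycles_add_add_le_of_mul_swap {π σ : Perm α} {a b : α} (hab : ¬σ.SameCycle a b)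
    (h : numCycles π + numCycles σ + numCycles (π * σ) ≤
      Nat.card α + 2 * Nat.card (Quotient (orbitSetoid π ⊔ orbitSetoid σ))) :
    numCycles π + numCycles (σ * swap a b) + numCycles (π * (σ * swap a b)) ≤
      Nat.card α + 2 * Nat.card (Quotient (orbitSetoid π ⊔ orbitSetoid (σ * swap a b))) := by
  have hσ := numCycles_mul_swap hab
  rw [orbitSetoid_mul_swap hab, ← sup_assoc, ← mul_assoc]
  by_cases hJ : (orbitSetoid π ⊔ orbitSetoid σ) a b
  · rw [sup_orbitSetoid_swap_of_rel hJ]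
    have := numCycles_mul_swap_le (π * σ) a b
    omega
  · have hπσ : ¬(π * σ).SameCycle a b := fun hc => hJ (orbitSetoid_mul_le π σ hc)
    have := numCycles_mul_swap hπσ
    have := card_quotient_sup_orbitSetoid_swap hJ
    omega

end

theorem numCycles_add_add_le (π σ : Perm α) :
    numCycles π + numCycles σ + numCycles (π * σ) ≤
      Nat.card α + 2 * Nat.card (Quotient (orbitSetoid π ⊔ orbitSetoid σ)) := by
  classical
  induction σ using induction_on_mul_swap_of_not_sameCycle with
  | one =>
    rw [numCycles_one, mul_one, orbitSetoid_one, sup_bot_eq, numCycles]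
    omega
  | mul_swap σ a b hab ih => exact numCycles_add_add_le_of_mul_swap hab ih

end Equiv.Perm

/-- For all permutations `π, σ ∈ S_n`: `|π| + |σ| + |πσ| ≥ 2|π ∨ σ|`, where `π ∨ σ` is
the join of the orbit partitions of `π` and of `σ`. -/
theorem permLen_ineq_join {n : ℕ} (π σ : Equiv.Perm (Fin n)) :
    permLen π + permLen σ + permLen (π * σ) ≥
      2 * pLen (orbitSetoid π ⊔ orbitSetoid σ) := by
  have h := numCycles_add_add_le π σ
  rw [Nat.card_fin] at h
  simp only [permLen, pLen, numCycles] at h ⊢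
  omega
end
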